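/- arXiv:math/0508109 — 3 statements merged into one kernel-verified Lean document; each statement's English description precedes it below -/
import Mathlib

section
/- The set of rational numbers { (e_1 + ... + e_M)^2 / (e_1^2 + ... + e_M^2) : M ≥ 4, e_1, ..., e_M positive integers } is dense in the real interval (1, +∞); that is, every real number x > 1 lies in the closure of this set. -/
open Filter Topology

lemma aux_mem (n m : ℕ) (hn : 1 ≤ n) (hm : 3 ≤ m) :
    ((n : ℝ) + m) ^ 2 / ((n : ℝ) ^ 2 + m) ∈ {y : ℝ | ∃ M : ℕ, 4 ≤ M ∧ ∃ e : Fin M → ℕ,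
      (∀ i, 0 < e i) ∧ y = (∑ i, (e i : ℝ)) ^ 2 / (∑ i, (e i : ℝ) ^ 2)} := by
  refine ⟨m + 1, by omega, fun i => if i = 0 then n else 1, ?_, ?_⟩
  · intro i; dsimp only; split <;> omega
  · have h1 : (∑ i : Fin (m+1), (((if i = 0 then n else 1 : ℕ)) : ℝ)) = (n : ℝ) + m := by
      rw [Fin.sum_univ_succ]; simp [Fin.succ_ne_zero]
    have h2 : (∑ i : Fin (m+1), (((if i = 0 then n else 1 : ℕ)) : ℝ) ^ 2) = (n : ℝ) ^ 2 + m := by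
      rw [Fin.sum_univ_succ]; simp [Fin.succ_ne_zero]
    rw [h1, h2]

/-- The set of rational numbers
`{ (e₁ + ⋯ + e_M)² / (e₁² + ⋯ + e_M²) : M ≥ 4, e₁, …, e_M positive integers }`
is dense in the real interval `(1, +∞)`. -/
theorem stmt_0 :
    ∀ x : ℝ, 1 < x →
      x ∈ closure {y : ℝ | ∃ M : ℕ, 4 ≤ M ∧ ∃ e : Fin M → ℕ, (∀ i, 0 < e i) ∧
        y = (∑ i, (e i : ℝ)) ^ 2 / (∑ i, (e i : ℝ) ^ 2)} := by
  intro x hx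
  set c : ℝ := Real.sqrt x - 1 with hc_def
  have hx0 : (0:ℝ) ≤ x := by linarith
  have hs1 : 1 < Real.sqrt x := by
    nlinarith [Real.sq_sqrt hx0, Real.sqrt_nonneg x]
  have hc : 0 < c := by simp only [hc_def]; linarith
  have hxc : x = (1 + c) ^ 2 := by
    have h : (1 + c) = Real.sqrt x := by rw [hc_def]; ring
    rw [h, Real.sq_sqrt hx0]
  -- sequences
  set m : ℕ → ℕ := fun n => ⌊c * n⌋₊ with hm_def
  set a : ℕ → ℝ := fun n => (m n : ℝ) / n with ha_def
  have hcn : Tendsto (fun n : ℕ => c * n) atTop atTop :=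
    (tendsto_natCast_atTop_atTop (R := ℝ)).const_mul_atTop hc
  have ha_le : ∀ n : ℕ, (m n : ℝ) ≤ c * n := fun n =>
    Nat.floor_le (by positivity)
  have ha_gt : ∀ n : ℕ, c * n - 1 < (m n : ℝ) := fun n =>
    Nat.sub_one_lt_floor _
  have ha : Tendsto a atTop (𝓝 c) := by
    apply tendsto_of_tendsto_of_tendsto_of_le_of_le'
      (g := fun n : ℕ => c - 1 / n) (h := fun _ : ℕ => c)
    · have : Tendsto (fun n : ℕ => (1:ℝ) / n) atTop (𝓝 0) :=
        tendsto_one_div_atTop_nhds_zero_nat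
      simpa using (tendsto_const_nhds (x := c)).sub this
    · exact tendsto_const_nhds
    · filter_upwards [eventually_ge_atTop 1] with n hn
      have hn0 : (0:ℝ) < n := by exact_mod_cast hn
      show c - 1 / n ≤ a n
      rw [ha_def]
      rw [le_div_iff₀ hn0]
      have h1 : (1 / (n:ℝ)) * n = 1 := by field_simp
      nlinarith [ha_gt n]
    · filter_upwards [eventually_ge_atTop 1] with n hn
      have hn0 : (0:ℝ) < n := by exact_mod_cast hn
      show a n ≤ c
      rw [ha_def, div_le_iff₀ hn0]
      exact ha_le n
  have han : Tendsto (fun n : ℕ => a n / n) atTop (𝓝 0) :=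
    ha.div_atTop (tendsto_natCast_atTop_atTop)
  have hg : Tendsto (fun n : ℕ => (1 + a n) ^ 2 / (1 + a n / n)) atTop (𝓝 x) := by
    have h1 : Tendsto (fun n : ℕ => (1 + a n) ^ 2) atTop (𝓝 ((1 + c) ^ 2)) :=
      ((tendsto_const_nhds.add ha).pow 2)
    have h2 : Tendsto (fun n : ℕ => 1 + a n / n) atTop (𝓝 1) := by
      simpa using (tendsto_const_nhds (x := (1:ℝ))).add han
    have := h1.div h2 one_ne_zero
    simpa only [hxc, div_one, Pi.div_def] using this
  have hy : Tendsto (fun n : ℕ => ((n : ℝ) + m n) ^ 2 / ((n : ℝ) ^ 2 + m n)) atTop (𝓝 x) := by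
    apply hg.congr'
    filter_upwards [eventually_ge_atTop 1] with n hn
    have hn0 : (0:ℝ) < n := by exact_mod_cast hn
    have hmn : (0:ℝ) ≤ (m n : ℝ) := by positivity
    rw [ha_def]
    field_simp
  refine mem_closure_of_tendsto hy ?_
  have hm3 : ∀ᶠ n : ℕ in atTop, 3 ≤ m n := by
    filter_upwards [hcn.eventually_ge_atTop 3] with n hn
    exact Nat.le_floor hn
  filter_upwards [eventually_ge_atTop 1, hm3] with n hn1 hn3
  exact aux_mem n (m n) hn1 hn3
end

section
/- The set of rational numbers { (e_1 + ... + e_M)^2 / (Σ_{1 ≤ i ≤ j ≤ M} e_i e_j) : M ≥ 4, e_1, ..., e_M positive integers } is dense in the real interval (1, 2); that is, every real number in (1,2) lies in the closure of this set. -/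
open Finset Filter

lemma diag_sum' (M : ℕ) (e : Fin M → ℝ) :
    ∑ p ∈ univ.filter (fun p : Fin M × Fin M => p.1 = p.2), e p.1 * e p.2
      = ∑ i, e i ^ 2 := by
  refine Finset.sum_bij' (fun p _ => p.1) (fun i _ => (i, i)) ?_ ?_ ?_ ?_ ?_
  · intro p hp; simp
  · intro i hi; simp
  · intro p hp; simp at hp; ext <;> simp [hp]
  · intro i hi; rfl
  · intro p hp; simp at hp; rw [← hp, sq]

lemma swap_sum' (M : ℕ) (e : Fin M → ℝ) :
    ∑ p ∈ univ.filter (fun p : Fin M × Fin M => p.2 < p.1), e p.1 * e p.2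
      = ∑ p ∈ univ.filter (fun p : Fin M × Fin M => p.1 < p.2), e p.1 * e p.2 := by
  refine Finset.sum_bij' (fun p _ => Prod.swap p) (fun p _ => Prod.swap p) ?_ ?_ ?_ ?_ ?_
  · intro p hp; simp at hp ⊢; exact hp
  · intro p hp; simp at hp ⊢; exact hp
  · intro p hp; simp
  · intro p hp; simp
  · intro p hp; exact (mul_comm _ _)

lemma pair_sum' (M : ℕ) (e : Fin M → ℝ) :
    ∑ p ∈ univ.filter (fun p : Fin M × Fin M => p.1 ≤ p.2), e p.1 * e p.2
      = ((∑ i, e i) ^ 2 + ∑ i, e i ^ 2) / 2 := by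
  have hT : (∑ i, e i) ^ 2 = ∑ p : Fin M × Fin M, e p.1 * e p.2 := by
    rw [sq, Finset.sum_mul_sum, ← Finset.univ_product_univ, Finset.sum_product]
  have hsplit : (∑ p ∈ univ.filter (fun p : Fin M × Fin M => p.1 ≤ p.2), e p.1 * e p.2)
      + ∑ p ∈ univ.filter (fun p : Fin M × Fin M => ¬ p.1 ≤ p.2), e p.1 * e p.2
      = ∑ p : Fin M × Fin M, e p.1 * e p.2 :=
    Finset.sum_filter_add_sum_filter_not _ _ _
  have hne : (univ.filter (fun p : Fin M × Fin M => ¬ p.1 ≤ p.2))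
      = univ.filter (fun p : Fin M × Fin M => p.2 < p.1) := by
    apply Finset.filter_congr; intro p _; simp [not_le]
  have hsplit2 : (∑ p ∈ univ.filter (fun p : Fin M × Fin M => p.1 ≤ p.2), e p.1 * e p.2)
      = (∑ p ∈ univ.filter (fun p : Fin M × Fin M => p.1 < p.2), e p.1 * e p.2)
        + ∑ i, e i ^ 2 := by
    rw [← diag_sum' M e, ← Finset.sum_union]
    · congr 1
      ext p
      simp [le_iff_lt_or_eq]
    · rw [Finset.disjoint_filter]
      intro p _ h
      simp [ne_of_lt h]
  rw [hne, swap_sum'] at hsplit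
  nlinarith [hsplit, hsplit2, hT]

/-- The set of rational numbers
`{ (e₁ + ⋯ + e_M)² / (Σ_{1 ≤ i ≤ j ≤ M} eᵢ eⱼ) : M ≥ 4, e₁, …, e_M positive integers }`
is dense in the real interval `(1, 2)`. -/
theorem stmt_1 :
    ∀ x : ℝ, x ∈ Set.Ioo (1 : ℝ) 2 →
      x ∈ closure {y : ℝ | ∃ M : ℕ, 4 ≤ M ∧ ∃ e : Fin M → ℕ, (∀ i, 0 < e i) ∧
        y = (∑ i, (e i : ℝ)) ^ 2 /
          (∑ p ∈ Finset.univ.filter (fun p : Fin M × Fin M => p.1 ≤ p.2),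
            (e p.1 : ℝ) * (e p.2 : ℝ))} := by
  rintro x ⟨hx1, hx2⟩
  have hx0 : (0:ℝ) < x := by linarith
  set t : ℝ := (2 - x) / x with ht_def
  have ht0 : 0 < t := by apply div_pos <;> linarith
  have ht1 : t < 1 := by rw [div_lt_one hx0]; linarith
  set s : ℝ := Real.sqrt t with hs_def
  have hs0 : 0 < s := Real.sqrt_pos.mpr ht0
  have hs1 : s < 1 := by
    rw [hs_def, show (1:ℝ) = Real.sqrt 1 by simp]
    exact Real.sqrt_lt_sqrt (le_of_lt ht0) ht1
  have hst : s ^ 2 = t := Real.sq_sqrt (le_of_lt ht0)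
  set μ : ℝ := s / (1 - s) with hμ_def
  have hμ0 : 0 < μ := div_pos hs0 (by linarith)
  set a : ℕ → ℝ := fun k => (⌈μ * k⌉₊ : ℝ) / k with ha_def
  have ha : Tendsto a atTop (nhds μ) := by
    apply tendsto_of_tendsto_of_tendsto_of_le_of_le' (g := fun _ : ℕ => μ)
      (h := fun k : ℕ => μ + 1/k)
    · exact tendsto_const_nhds
    · simpa using tendsto_const_nhds.add (tendsto_one_div_atTop_nhds_zero_nat (𝕜 := ℝ))
    · filter_upwards [eventually_ge_atTop 1] with k hk
      have hk0 : (0:ℝ) < k := by exact_mod_cast hk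
      rw [ha_def, le_div_iff₀ hk0]
      exact Nat.le_ceil _
    · filter_upwards [eventually_ge_atTop 1] with k hk
      have hk0 : (0:ℝ) < k := by exact_mod_cast hk
      rw [ha_def, div_le_iff₀ hk0]
      have := Nat.ceil_lt_add_one (by positivity : (0:ℝ) ≤ μ * k)
      have hkk : (1/(k:ℝ)) * (k:ℝ) = 1 := one_div_mul_cancel (ne_of_gt hk0)
      nlinarith [this, hkk]
  have hden : (μ + 1)^2 + μ^2 > 0 := by positivity
  have hF : Tendsto (fun k : ℕ => 2*(a k + 1)^2 / ((a k + 1)^2 + (a k)^2 + 1/k))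
      atTop (nhds (2*(μ+1)^2 / ((μ+1)^2 + μ^2))) := by
    have h1 : Tendsto (fun k : ℕ => 2*(a k + 1)^2) atTop (nhds (2*(μ+1)^2)) :=
      (((ha.add tendsto_const_nhds).pow 2).const_mul 2)
    have h2 : Tendsto (fun k : ℕ => (a k + 1)^2 + (a k)^2 + 1/k) atTop
        (nhds ((μ+1)^2 + μ^2)) := by
      have := (((ha.add (tendsto_const_nhds (x := (1:ℝ)))).pow 2).add (ha.pow 2)).add
        tendsto_one_div_atTop_nhds_zero_nat
      simpa using this
    exact h1.div h2 (ne_of_gt hden)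
  have hval : 2*(μ+1)^2 / ((μ+1)^2 + μ^2) = x := by
    have h1s : (1:ℝ) - s ≠ 0 := by linarith
    rw [hμ_def]
    rw [div_eq_iff (by
      have : (s/(1-s)+1)^2 + (s/(1-s))^2 > 0 := by positivity
      linarith)]
    field_simp
    nlinarith [hst, ht_def, div_mul_cancel₀ (2-x) (ne_of_gt hx0)]
  set Y : ℕ → ℝ := fun k =>
    2*((⌈μ * k⌉₊:ℝ) + k)^2 / (((⌈μ * k⌉₊:ℝ) + k)^2 + ((⌈μ * k⌉₊:ℝ)^2 + k)) with hY_def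
  have hYF : ∀ᶠ k in atTop, Y k
      = 2*(a k + 1)^2 / ((a k + 1)^2 + (a k)^2 + 1/k) := by
    filter_upwards [eventually_ge_atTop 1] with k hk
    have hk0 : (0:ℝ) < k := by exact_mod_cast hk
    have hn0 : (0:ℝ) ≤ (⌈μ * k⌉₊:ℝ) := by positivity
    have hD : ((⌈μ * k⌉₊:ℝ) + k)^2 + ((⌈μ * k⌉₊:ℝ)^2 + k) ≠ 0 := by positivity
    have hD' : (a k + 1)^2 + (a k)^2 + 1/k ≠ 0 := by
      rw [ha_def]; positivity
    rw [hY_def, div_eq_div_iff hD hD', ha_def]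
    field_simp
    ring
  have hY : Tendsto Y atTop (nhds x) := by
    rw [← hval]
    exact hF.congr' (hYF.mono fun k h => h.symm)
  apply mem_closure_of_tendsto hY
  filter_upwards [eventually_ge_atTop 3] with k hk
  have hk1 : 1 ≤ k := by omega
  have hk0 : (0:ℝ) < k := by exact_mod_cast hk1
  have hnpos : 0 < ⌈μ * k⌉₊ := Nat.ceil_pos.mpr (by positivity)
  refine ⟨k + 1, by omega, fun i => if i = 0 then ⌈μ * k⌉₊ else 1, ?_, ?_⟩
  · intro i
    by_cases h : i = 0 <;> simp [h, hnpos]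
  · have hsum1 : (∑ i : Fin (k+1),
        ((if i = 0 then ⌈μ * k⌉₊ else 1 : ℕ) : ℝ)) = (⌈μ * k⌉₊:ℝ) + k := by
      rw [Fin.sum_univ_succ]
      simp [Fin.succ_ne_zero]
    have hsum2 : (∑ i : Fin (k+1),
        ((if i = 0 then ⌈μ * k⌉₊ else 1 : ℕ) : ℝ) ^ 2) = (⌈μ * k⌉₊:ℝ)^2 + k := by
      rw [Fin.sum_univ_succ]
      simp [Fin.succ_ne_zero]
    rw [pair_sum' (k+1) (fun i => ((if i = 0 then ⌈μ * k⌉₊ else 1 : ℕ) : ℝ)),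
      hsum1, hsum2, hY_def]
    have hD : ((⌈μ * k⌉₊:ℝ) + k)^2 + ((⌈μ * k⌉₊:ℝ)^2 + k) ≠ 0 := by positivity
    rw [div_div_eq_mul_div]
    ring
end

section
/- Let N ≥ 3 be an integer, let l_1, ..., l_N be positive real numbers, let G be a positive real number, and let d_1, ..., d_{N−2} be positive integers. Set a = −(N−1)! · G · Σ_{j=1}^N ∏_{k ≠ j} l_k, b = N! · G · ∏_{i=1}^N l_i, C = (N−2)! · G · Σ_{1 ≤ i < j ≤ N} ∏_{k ≠ i, j} l_k, s = Σ_{i=1}^{N−2} d_i, and Q = Σ_{1 ≤ i ≤ j ≤ N−2} d_i d_j. Then (2C − 2·a·s + b·s²) / (C − a·s + b·Q) = 2 − N(N−1)·(Σ_{i=1}^{N−2} d_i²) / ( Σ_{1 ≤ i < j ≤ N} 1/(l_i l_j) + (N−1)·( s · Σ_{i=1}^N 1/l_i + N·Q ) ). -/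
/-!
Dividing out `P = ∏ lᵢ` gives `∏_{k≠j} l_k = P / l_j` and `∏_{k≠i,j} l_k = P / (lᵢ lⱼ)`, so with
`K = (N-2)!·G·P` one has `a = -(N-1)·K·Σ 1/lᵢ`, `b = N(N-1)·K` and `C = K·Σ_{i<j} 1/(lᵢlⱼ)`.
Together with `s² = 2Q - Σ dᵢ²`, the denominator becomes `K·D` and the numerator
`K·(2D - N(N-1)·Σ dᵢ²)`, where `D` is the denominator on the right-hand side; `D > 0` because
its first summand is.
-/

open Finset
open scoped Nat

theorem Finset.prod_erase_eq_div₀ {ι M : Type*} [DecidableEq ι] [CommGroupWithZero M]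
    {s : Finset ι} {f : ι → M} {a : ι} (ha : a ∈ s) (hfa : f a ≠ 0) :
    ∏ x ∈ s.erase a, f x = (∏ x ∈ s, f x) / f a := by
  rw [eq_div_iff hfa, mul_comm, mul_prod_erase s f ha]

theorem Finset.sum_filter_le_swap {ι R : Type*} [Fintype ι] [LinearOrder ι] [CommSemiring R]
    (f : ι → R) :
    ∑ p ∈ univ.filter (fun p : ι × ι => p.2 ≤ p.1), f p.1 * f p.2 =
      ∑ p ∈ univ.filter (fun p : ι × ι => p.1 ≤ p.2), f p.1 * f p.2 :=
  sum_equiv (Equiv.prodComm ι ι) (by simp) fun p _ => by simp [mul_comm]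

/-- The pairs `i ≤ j` and `j ≤ i` cover all of `ι × ι` and overlap on the diagonal. -/
theorem Finset.sq_sum_add_sum_sq {ι R : Type*} [Fintype ι] [LinearOrder ι] [CommSemiring R]
    (f : ι → R) :
    (∑ i, f i) ^ 2 + ∑ i, f i ^ 2 =
      2 * ∑ p ∈ univ.filter (fun p : ι × ι => p.1 ≤ p.2), f p.1 * f p.2 := by
  have h_union : univ.filter (fun p : ι × ι => p.1 ≤ p.2) ∪ univ.filter (fun p => p.2 ≤ p.1) =
      univ := by
    ext p; simp [le_total]
  have h_inter : univ.filter (fun p : ι × ι => p.1 ≤ p.2) ∩ univ.filter (fun p => p.2 ≤ p.1) =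
      (univ : Finset ι).diag := by
    ext ⟨i, j⟩; simp [le_antisymm_iff]
  have h := sum_union_inter (s₁ := univ.filter (fun p : ι × ι => p.1 ≤ p.2))
    (s₂ := univ.filter (fun p => p.2 ≤ p.1)) (f := fun p => f p.1 * f p.2)
  rw [h_union, h_inter, diag, sum_map, sum_filter_le_swap, ← two_mul] at h
  rw [← h, sq, sum_mul_sum, ← univ_product_univ, sum_product]
  simp [sq]

theorem Finset.prod_univ_erase_erase_eq_div {ι K : Type*} [Fintype ι] [DecidableEq ι] [Field K]
    {l : ι → K} (hl : ∀ i, l i ≠ 0) {i j : ι} (hij : i ≠ j) :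
    ∏ k ∈ (univ.erase i).erase j, l k = (∏ k, l k) / (l i * l j) := by
  rw [prod_erase_eq_div₀ (mem_erase.2 ⟨hij.symm, mem_univ j⟩) (hl j),
    prod_erase_eq_div₀ (mem_univ i) (hl i), div_div]

theorem Nat.cast_factorial_sub_one {R : Type*} [CommRing R] {N : ℕ} (hN : 2 ≤ N) :
    ((N - 1)! : R) = ((N : R) - 1) * (N - 2)! := by
  obtain ⟨n, rfl⟩ : ∃ n, N = n + 2 := ⟨N - 2, by omega⟩
  simp [Nat.factorial_succ]
  ring

theorem Nat.cast_factorial_eq_mul_factorial_sub_two {R : Type*} [CommRing R] {N : ℕ}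
    (hN : 2 ≤ N) : (N ! : R) = N * ((N : R) - 1) * (N - 2)! := by
  obtain ⟨n, rfl⟩ : ∃ n, N = n + 2 := ⟨N - 2, by omega⟩
  simp [Nat.factorial_succ]
  ring

theorem Finset.sum_prod_univ_erase_eq_mul_sum_one_div {ι K : Type*} [Fintype ι] [DecidableEq ι]
    [Field K] {l : ι → K} (hl : ∀ i, l i ≠ 0) :
    ∑ j, ∏ k ∈ univ.erase j, l k = (∏ k, l k) * ∑ j, 1 / l j := by
  rw [mul_sum]
  exact sum_congr rfl fun j _ => by
    rw [prod_erase_eq_div₀ (mem_univ j) (hl j), div_eq_mul_one_div]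

theorem Finset.sum_prod_univ_erase_erase_eq_mul_sum_one_div {ι K : Type*} [Fintype ι]
    [LinearOrder ι] [Field K] {l : ι → K} (hl : ∀ i, l i ≠ 0) :
    ∑ p ∈ univ.filter (fun p : ι × ι => p.1 < p.2), ∏ k ∈ (univ.erase p.1).erase p.2, l k =
      (∏ k, l k) * ∑ p ∈ univ.filter (fun p : ι × ι => p.1 < p.2), 1 / (l p.1 * l p.2) := by
  rw [mul_sum]
  exact sum_congr rfl fun p hp => by
    rw [prod_univ_erase_erase_eq_div hl (mem_filter.1 hp).2.ne, div_eq_mul_one_div]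

theorem Finset.sum_filter_lt_one_div_mul_pos {ι K : Type*} [Fintype ι] [LinearOrder ι]
    [Field K] [LinearOrder K] [IsStrictOrderedRing K] {l : ι → K} (hl : ∀ i, 0 < l i)
    {i j : ι} (hij : i < j) :
    0 < ∑ p ∈ univ.filter (fun p : ι × ι => p.1 < p.2), 1 / (l p.1 * l p.2) :=
  sum_pos (fun p _ => one_div_pos.2 (mul_pos (hl p.1) (hl p.2))) ⟨(i, j), by simpa using hij⟩

theorem div_eq_two_sub_of_common_factor {n K S₁ S₂ s Q T a b C : ℝ} (hK : K ≠ 0)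
    (hD : S₂ + (n - 1) * (s * S₁ + n * Q) ≠ 0) (ha : a = -((n - 1) * K * S₁))
    (hb : b = n * (n - 1) * K) (hC : C = K * S₂) (hs : s ^ 2 = 2 * Q - T) :
    (2 * C - 2 * a * s + b * s ^ 2) / (C - a * s + b * Q) =
      2 - n * (n - 1) * T / (S₂ + (n - 1) * (s * S₁ + n * Q)) := by
  calc (2 * C - 2 * a * s + b * s ^ 2) / (C - a * s + b * Q)
      = (K * (2 * (S₂ + (n - 1) * (s * S₁ + n * Q)) - n * (n - 1) * T)) /
          (K * (S₂ + (n - 1) * (s * S₁ + n * Q))) := by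
        rw [ha, hb, hC, hs]; ring
    _ = 2 - n * (n - 1) * T / (S₂ + (n - 1) * (s * S₁ + n * Q)) := by
        rw [mul_div_mul_left _ _ hK, sub_div, mul_div_cancel_right₀ _ hD]

theorem stmt_15_general (N : ℕ) (hN : 3 ≤ N) (l : Fin N → ℝ) (hl : ∀ i, 0 < l i)
    (G : ℝ) (hG : 0 < G) (d : Fin (N - 2) → ℕ)
    (a b C s Q : ℝ)
    (ha : a = -((Nat.factorial (N - 1) : ℝ) * G *
      ∑ j, ∏ k ∈ Finset.univ.erase j, l k))
    (hb : b = (Nat.factorial N : ℝ) * G * ∏ i, l i)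
    (hC : C = (Nat.factorial (N - 2) : ℝ) * G *
      ∑ p ∈ Finset.univ.filter (fun p : Fin N × Fin N => p.1 < p.2),
        ∏ k ∈ (Finset.univ.erase p.1).erase p.2, l k)
    (hs : s = ∑ i, (d i : ℝ))
    (hQ : Q = ∑ p ∈ Finset.univ.filter (fun p : Fin (N - 2) × Fin (N - 2) => p.1 ≤ p.2),
      (d p.1 : ℝ) * (d p.2 : ℝ)) :
    (2 * C - 2 * a * s + b * s ^ 2) / (C - a * s + b * Q) =
      2 - (N : ℝ) * ((N : ℝ) - 1) * (∑ i, (d i : ℝ) ^ 2) /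
        ((∑ p ∈ Finset.univ.filter (fun p : Fin N × Fin N => p.1 < p.2),
            1 / (l p.1 * l p.2)) +
          ((N : ℝ) - 1) * (s * (∑ i, 1 / l i) + (N : ℝ) * Q)) := by
  have hl₀ : ∀ i, l i ≠ 0 := fun i => (hl i).ne'
  have hP : ∏ i, l i ≠ 0 := prod_ne_zero_iff.2 fun i _ => hl₀ i
  have hD : 0 < (∑ p ∈ univ.filter (fun p : Fin N × Fin N => p.1 < p.2), 1 / (l p.1 * l p.2)) +
      ((N : ℝ) - 1) * (s * (∑ i, 1 / l i) + (N : ℝ) * Q) := by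
    have hN₁ : (0 : ℝ) ≤ N - 1 := by
      have : (3 : ℝ) ≤ N := by exact_mod_cast hN
      linarith
    have hs₀ : 0 ≤ s := hs ▸ by positivity
    have hQ₀ : 0 ≤ Q := hQ ▸ by positivity
    have hS₁ : 0 ≤ ∑ i, 1 / l i := sum_nonneg fun i _ => (one_div_pos.2 (hl i)).le
    exact add_pos_of_pos_of_nonneg
      (sum_filter_lt_one_div_mul_pos hl (i := ⟨0, by omega⟩) (j := ⟨1, by omega⟩) (by simp))
      (mul_nonneg hN₁ (by positivity))
  refine div_eq_two_sub_of_common_factor (K := (N - 2)! * G * ∏ i, l i)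
    (mul_ne_zero (mul_ne_zero (by positivity) hG.ne') hP) hD.ne' ?_ ?_ ?_ ?_
  · rw [ha, sum_prod_univ_erase_eq_mul_sum_one_div hl₀, Nat.cast_factorial_sub_one (by omega)]
    ring
  · rw [hb, Nat.cast_factorial_eq_mul_factorial_sub_two (N := N) (by omega)]
    ring
  · rw [hC, sum_prod_univ_erase_erase_eq_mul_sum_one_div hl₀]
    ring
  · rw [eq_sub_iff_add_eq, hs, hQ, sq_sum_add_sum_sq]

/-- Let `N ≥ 3`, let `l₁, …, l_N` be positive reals, `G > 0`, and `d₁, …, d_{N−2}`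
positive integers. With
`a = −(N−1)!·G·Σⱼ ∏_{k≠j} l_k`, `b = N!·G·∏ lᵢ`,
`C = (N−2)!·G·Σ_{i<j} ∏_{k≠i,j} l_k`, `s = Σ dᵢ`, `Q = Σ_{i≤j} dᵢ dⱼ`, one has
`(2C − 2as + bs²)/(C − as + bQ)
  = 2 − N(N−1)·(Σ dᵢ²) / (Σ_{i<j} 1/(lᵢlⱼ) + (N−1)(s·Σ 1/lᵢ + N·Q))`. -/
theorem stmt_15 (N : ℕ) (hN : 3 ≤ N) (l : Fin N → ℝ) (hl : ∀ i, 0 < l i)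
    (G : ℝ) (hG : 0 < G) (d : Fin (N - 2) → ℕ) (hd : ∀ i, 0 < d i)
    (a b C s Q : ℝ)
    (ha : a = -((Nat.factorial (N - 1) : ℝ) * G *
      ∑ j, ∏ k ∈ Finset.univ.erase j, l k))
    (hb : b = (Nat.factorial N : ℝ) * G * ∏ i, l i)
    (hC : C = (Nat.factorial (N - 2) : ℝ) * G *
      ∑ p ∈ Finset.univ.filter (fun p : Fin N × Fin N => p.1 < p.2),
        ∏ k ∈ (Finset.univ.erase p.1).erase p.2, l k)
    (hs : s = ∑ i, (d i : ℝ))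
    (hQ : Q = ∑ p ∈ Finset.univ.filter (fun p : Fin (N - 2) × Fin (N - 2) => p.1 ≤ p.2),
      (d p.1 : ℝ) * (d p.2 : ℝ)) :
    (2 * C - 2 * a * s + b * s ^ 2) / (C - a * s + b * Q) =
      2 - (N : ℝ) * ((N : ℝ) - 1) * (∑ i, (d i : ℝ) ^ 2) /
        ((∑ p ∈ Finset.univ.filter (fun p : Fin N × Fin N => p.1 < p.2),
            1 / (l p.1 * l p.2)) +
          ((N : ℝ) - 1) * (s * (∑ i, 1 / l i) + (N : ℝ) * Q)) :=
  stmt_15_general N hN l hl G hG d a b C s Q ha hb hC hs hQ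
end
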